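/- arXiv:2410.02481 — 2 statements merged into one kernel-verified Lean document; each statement's English description precedes it below -/
import Mathlib

section
/- Define f(k', k'') = ∑_{(S,T)} (-1)^{|supp|} where the sum ranges over all k ≥ max(k',k'') and all pairs of subsets S, T ⊆ Fin k with |S| = k', |T| = k'', S ∪ T = Fin k, and the summand is (-1)^k. Then f(k', k'') = (-1)^{k' + k''} for all nonnegative integers k', k''. -/
/-!
A covering pair `(S, T)` of a `k`-set is determined by `S` and the complement `Tᶜ ⊆ S`, so there
are `C(k, k') * C(k', k - k'')` of them. After the substitution `k = k'' + j` the signed sum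
becomes `(-1) ^ (k' + k'')` times the `k'`-th forward difference of `x ↦ C(x, k')` at `k''`,
and that difference is `C(x, 0) = 1` by Pascal's rule.
-/

open Finset

theorem sum_range_neg_one_pow_mul_choose_mul_choose_add (a b : ℕ) :
    ∑ j ∈ range (a + 1), (-1 : ℤ) ^ (a - j) * a.choose j * (b + j).choose a = 1 := by
  have h := fwdDiff_iter_eq_sum_shift 1 (fun x ↦ x.choose a : ℕ → ℤ) a b
  have hdiff := fwdDiff_iter_choose 0 a
  rw [add_zero] at hdiff
  rw [hdiff] at h
  simpa [eq_comm, add_comm, mul_assoc] using h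

theorem sum_Icc_neg_one_pow_mul_choose_mul_choose (a b : ℕ) :
    ∑ k ∈ Icc (max a b) (a + b), (-1 : ℤ) ^ k * (k.choose a * a.choose (k - b)) =
      (-1) ^ (a + b) := by
  have hzero : ∀ k ∈ Icc b (a + b), k ∉ Icc (max a b) (a + b) →
      (-1 : ℤ) ^ k * (k.choose a * a.choose (k - b)) = 0 := by
    intro k hk hk'
    simp only [mem_Icc, max_le_iff] at hk hk'
    simp [Nat.choose_eq_zero_of_lt (by omega : k < a)]
  have hshift : Icc b (a + b) = (range (a + 1)).map (addLeftEmbedding b) := by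
    rw [Nat.range_succ_eq_Icc_zero, map_add_left_Icc, add_zero, add_comm]
  rw [sum_subset (Icc_subset_Icc_left (le_max_right a b)) hzero, hshift, sum_map]
  calc ∑ j ∈ range (a + 1), (-1 : ℤ) ^ (b + j) * ((b + j).choose a * a.choose (b + j - b))
      = (-1) ^ (a + b) *
          ∑ j ∈ range (a + 1), (-1 : ℤ) ^ (a - j) * a.choose j * (b + j).choose a := by
        rw [mul_sum]
        refine sum_congr rfl fun j hj ↦ ?_
        have hja : j ≤ a := Nat.lt_succ_iff.mp (mem_range.mp hj)
        have hsign : (-1 : ℤ) ^ (b + j) = (-1) ^ (a + b) * (-1) ^ (a - j) := by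
          rw [← pow_add, show a + b + (a - j) = b + j + 2 * (a - j) by omega, pow_add _ (b + j),
            pow_mul]
          simp
        rw [Nat.add_sub_cancel_left, hsign]
        ring
    _ = (-1) ^ (a + b) := by rw [sum_range_neg_one_pow_mul_choose_mul_choose_add, mul_one]

theorem Finset.compl_subset_iff_union_eq_univ {α : Type*} [Fintype α] [DecidableEq α]
    {S T : Finset α} : Tᶜ ⊆ S ↔ S ∪ T = univ :=
  codisjoint_iff_compl_le_left.symm.trans codisjoint_iff

theorem card_filter_card_eq_and_union_eq_univ {α : Type*} [Fintype α] [DecidableEq α]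
    (S : Finset α) {b : ℕ} (hb : b ≤ Fintype.card α) :
    #{T : Finset α | #T = b ∧ S ∪ T = univ} = (#S).choose (Fintype.card α - b) := by
  rw [← card_powersetCard]
  refine card_nbij' compl compl (fun T hT ↦ ?_) (fun U hU ↦ ?_) (fun T _ ↦ compl_compl T)
    (fun U _ ↦ compl_compl U)
  · simp only [mem_coe, mem_filter, mem_univ, true_and] at hT
    simp only [mem_coe, mem_powersetCard, card_compl, compl_subset_iff_union_eq_univ, hT,
      and_self]
  · simp only [mem_coe, mem_powersetCard] at hU
    simp only [mem_coe, mem_filter, mem_univ, true_and, ← compl_subset_iff_union_eq_univ,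
      compl_compl, hU.1, and_true, card_compl, hU.2]
    omega

theorem card_filter_card_eq_and_card_eq_and_union_eq_univ {α : Type*} [Fintype α]
    [DecidableEq α] (a : ℕ) {b : ℕ} (hb : b ≤ Fintype.card α) :
    #{p : Finset α × Finset α | #p.1 = a ∧ #p.2 = b ∧ p.1 ∪ p.2 = univ} =
      (Fintype.card α).choose a * a.choose (Fintype.card α - b) := by
  rw [card_filter, Fintype.sum_prod_type]
  simp only [← card_filter]
  calc ∑ S : Finset α, #{T : Finset α | #S = a ∧ #T = b ∧ S ∪ T = univ}
      = ∑ S ∈ powersetCard a univ, #{T : Finset α | #T = b ∧ S ∪ T = univ} := by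
        rw [show powersetCard a univ = univ.filter (#· = a) by ext; simp, sum_filter]
        refine sum_congr rfl fun S _ ↦ ?_
        split_ifs with hS <;> simp [hS]
    _ = (Fintype.card α).choose a * a.choose (Fintype.card α - b) := by
        rw [sum_congr rfl fun S hS ↦ by
            rw [card_filter_card_eq_and_union_eq_univ S hb, mem_powersetCard_univ.mp hS],
          sum_const, card_powersetCard, card_univ, smul_eq_mul]

theorem signed_covering_pairs_sum (k' k'' : ℕ) :
    (∑ k ∈ Finset.Icc (max k' k'') (k' + k''),
        (-1 : ℤ) ^ k *
          ((Finset.univ.filter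
              (fun p : Finset (Fin k) × Finset (Fin k) =>
                p.1.card = k' ∧ p.2.card = k'' ∧ p.1 ∪ p.2 = Finset.univ)).card : ℤ)) =
      (-1 : ℤ) ^ (k' + k'') := by
  rw [← sum_Icc_neg_one_pow_mul_choose_mul_choose k' k'']
  refine sum_congr rfl fun k hk ↦ ?_
  have hk'' : k'' ≤ Fintype.card (Fin k) := by
    rw [Fintype.card_fin]
    exact (le_max_right _ _).trans (mem_Icc.mp hk).1
  rw [card_filter_card_eq_and_card_eq_and_union_eq_univ k' hk'', Fintype.card_fin, Nat.cast_mul]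
end

section
/- For all nonnegative integers k', k'', the alternating sum ∑_{k = max(k',k'')}^{k'+k''} (-1)^k · k! / ((k - k'')! · (k - k')! · (k' + k'' - k)!) equals (-1)^{k' + k''}. -/
open Finset

lemma Srec (n m : ℕ) :
    (∑ j ∈ range (m+2), (-1:ℤ)^j * ((n+1).choose j) * ((n+1+(m+1)-j).choose (n+1)))
    = (∑ j ∈ range (m+1), (-1:ℤ)^j * ((n+1).choose j) * ((n+1+m-j).choose (n+1)))
      + ((∑ j ∈ range (m+2), (-1:ℤ)^j * (n.choose j) * ((n+(m+1)-j).choose n))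
         - (∑ j ∈ range (m+1), (-1:ℤ)^j * (n.choose j) * ((n+m-j).choose n))) := by
  have h1 : (∑ j ∈ range (m+2), (-1:ℤ)^j * ((n+1).choose j) * ((n+1+(m+1)-j).choose (n+1)))
      = (∑ j ∈ range (m+2), (-1:ℤ)^j * ((n+1).choose j) * ((n+1+m-j).choose (n+1)))
        + (∑ j ∈ range (m+2), (-1:ℤ)^j * ((n+1).choose j) * ((n+1+m-j).choose n)) := by
    rw [← Finset.sum_add_distrib]
    apply Finset.sum_congr rfl
    intro j hj
    simp only [Finset.mem_range] at hj
    have hj' : j ≤ m+1 := by omega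
    have he : n+1+(m+1)-j = (n+1+m-j)+1 := by omega
    rw [he]
    rw [Nat.choose_succ_succ' (n+1+m-j) n]
    push_cast
    ring
  rw [h1]
  congr 1
  · rw [Finset.sum_range_succ]
    have : ((n+1+m-(m+1)).choose (n+1)) = 0 := by
      apply Nat.choose_eq_zero_of_lt; omega
    rw [this]
    push_cast
    ring
  · -- U = S(n, m+1) - S(n, m)
    rw [Finset.sum_range_succ' (fun j => (-1:ℤ)^j * ((n+1).choose j) * ((n+1+m-j).choose n)) (m+1),
        Finset.sum_range_succ' (fun j => (-1:ℤ)^j * (n.choose j) * ((n+(m+1)-j).choose n)) (m+1)]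
    have h2 : (∑ i ∈ range (m+1), (-1:ℤ)^(i+1) * ((n+1).choose (i+1)) * ((n+1+m-(i+1)).choose n))
        = (∑ i ∈ range (m+1), ((-1:ℤ)^(i+1) * (n.choose (i+1)) * ((n+(m+1)-(i+1)).choose n)
            - (-1:ℤ)^i * (n.choose i) * ((n+m-i).choose n))) := by
      apply Finset.sum_congr rfl
      intro i hi
      simp only [Finset.mem_range] at hi
      have e1 : n+1+m-(i+1) = n+m-i := by omega
      have e2 : n+(m+1)-(i+1) = n+m-i := by omega
      rw [e1, e2, Nat.choose_succ_succ n i]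
      push_cast
      ring
    rw [h2, Finset.sum_sub_distrib]
    have e3 : n+1+m-0 = n+(m+1)-0 := by omega
    rw [e3]
    simp only [Nat.choose_zero_right, Nat.cast_one]
    ring

lemma keyS : ∀ m n : ℕ, (∑ j ∈ range (m+1), (-1:ℤ)^j * (n.choose j) * ((n+m-j).choose n)) = 1 := by
  intro m
  induction m with
  | zero => intro n; simp
  | succ m ihm =>
    intro n
    induction n with
    | zero =>
      rw [Finset.sum_eq_single 0]
      · simp
      · intro j hj hne
        rw [Nat.choose_eq_zero_of_lt (Nat.pos_of_ne_zero hne)]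
        simp
      · intro h; simp at h
    | succ n ihn =>
      have h := Srec n m
      rw [show m + 1 + 1 = m + 2 from rfl, h, ihm (n+1), ihn, ihm n]
      ring

lemma fact_div_eq (k' k'' k : ℕ) (h1 : k' ≤ k) (h2 : k'' ≤ k) (h3 : k ≤ k' + k'') :
    k.factorial / ((k - k'').factorial * (k - k').factorial * (k' + k'' - k).factorial)
      = k.choose k' * k'.choose (k' + k'' - k) := by
  have hc : k' + k'' - k ≤ k' := by omega
  have e1 := Nat.choose_mul_factorial_mul_factorial h1
  have e2 := Nat.choose_mul_factorial_mul_factorial hc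
  have hkc : k' - (k' + k'' - k) = k - k'' := by omega
  rw [hkc] at e2
  apply Nat.div_eq_of_eq_mul_left
  · positivity
  · rw [← e1, ← e2]; ring

theorem alternating_multinomial_sum (k' k'' : ℕ) :
    (∑ k ∈ Finset.Icc (max k' k'') (k' + k''),
        (-1 : ℤ) ^ k *
          ((Nat.factorial k /
              (Nat.factorial (k - k'') * Nat.factorial (k - k') *
                Nat.factorial (k' + k'' - k)) : ℕ) : ℤ)) =
      (-1 : ℤ) ^ (k' + k'') := by
  have step1 : (∑ k ∈ Finset.Icc (max k' k'') (k' + k''),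
        (-1 : ℤ) ^ k *
          ((Nat.factorial k /
              (Nat.factorial (k - k'') * Nat.factorial (k - k') *
                Nat.factorial (k' + k'' - k)) : ℕ) : ℤ))
      = ∑ k ∈ Finset.Icc k' (k' + k''),
          (-1 : ℤ) ^ k * ((k.choose k' * k'.choose (k' + k'' - k) : ℕ) : ℤ) := by
    rw [← Finset.sum_subset (Finset.Icc_subset_Icc_left (le_max_left k' k''))]
    · apply Finset.sum_congr rfl
      intro k hk
      simp only [Finset.mem_Icc, le_max_iff, max_le_iff] at hk
      obtain ⟨⟨hk1, hk2⟩, hk3⟩ := hk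
      rw [fact_div_eq k' k'' k hk1 hk2 hk3]
    · intro k hk hk2
      simp only [Finset.mem_Icc] at hk hk2
      have : k < max k' k'' := by omega
      have : k' < k' + k'' - k := by omega
      rw [Nat.choose_eq_zero_of_lt this]
      simp
  rw [step1, ← Finset.Ico_add_one_right_eq_Icc, Finset.sum_Ico_eq_sum_range]
  have hr : k' + k'' + 1 - k' = k'' + 1 := by omega
  rw [hr]
  have step2 : (∑ i ∈ range (k'' + 1),
        (-1 : ℤ) ^ (k' + i) * (((k' + i).choose k' * k'.choose (k' + k'' - (k' + i)) : ℕ) : ℤ))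
      = (-1:ℤ)^k' * ∑ i ∈ range (k'' + 1),
          (-1 : ℤ) ^ i * (((k' + i).choose k' : ℕ) : ℤ) * ((k'.choose (k'' - i) : ℕ) : ℤ) := by
    rw [Finset.mul_sum]
    apply Finset.sum_congr rfl
    intro i hi
    have : k' + k'' - (k' + i) = k'' - i := by omega
    rw [this, pow_add]
    push_cast
    ring
  rw [step2]
  have step3 : (∑ i ∈ range (k'' + 1),
        (-1 : ℤ) ^ i * (((k' + i).choose k' : ℕ) : ℤ) * ((k'.choose (k'' - i) : ℕ) : ℤ))
      = (-1:ℤ)^k'' := by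
    rw [← Finset.sum_range_reflect]
    have h : (∑ j ∈ range (k'' + 1),
          (-1 : ℤ) ^ (k'' + 1 - 1 - j) * (((k' + (k'' + 1 - 1 - j)).choose k' : ℕ) : ℤ)
            * ((k'.choose (k'' - (k'' + 1 - 1 - j)) : ℕ) : ℤ))
        = (-1:ℤ)^k'' * ∑ j ∈ range (k'' + 1),
            (-1 : ℤ) ^ j * ((k'.choose j : ℕ) : ℤ) * (((k' + k'' - j).choose k' : ℕ) : ℤ) := by
      rw [Finset.mul_sum]
      apply Finset.sum_congr rfl
      intro j hj
      simp only [Finset.mem_range] at hj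
      have e1 : k'' + 1 - 1 - j = k'' - j := by omega
      have e2 : k' + (k'' - j) = k' + k'' - j := by omega
      have e3 : k'' - (k'' - j) = j := by omega
      have h5 : (-1:ℤ) ^ (k'' - j) * (-1:ℤ)^j = (-1:ℤ)^k'' := by
        rw [← pow_add]; congr 1; omega
      have h6 : (-1:ℤ)^j * (-1:ℤ)^j = 1 := by
        rw [← pow_add]; exact Even.neg_one_pow ⟨j, rfl⟩
      have e4 : (-1:ℤ) ^ (k'' - j) = (-1:ℤ)^k'' * (-1:ℤ)^j := by
        rw [← h5, mul_assoc, h6, mul_one]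
      rw [e1, e2, e3, e4]
      ring
    rw [h, keyS k'' k']
    ring
  rw [step3, ← pow_add]
end
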